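/- For every INF sentence φ = ∀x̄ (ψ → L[x̄]) where L is a literal, the associated INF propagator I_φ is a monotone propagator for φ. -/
import Mathlib

inductive Four : Type
  | t | f | u | i
deriving DecidableEq

namespace Four

/-- Belnap inverse -/
def inv : Four → Four
  | t => f
  | f => t
  | u => u
  | i => i

/-- precision order -/
def lep : Four → Four → Prop
  | u, _ => True
  | t, t => True
  | f, f => True
  | _, i => True
  | _, _ => False

/-- truth order -/
def leT : Four → Four → Prop
  | f, _ => True
  | _, t => True
  | u, u => True
  | i, i => True
  | _, _ => False

/-- glb in the truth order -/
def meetT : Four → Four → Four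
  | f, _ => f
  | _, f => f
  | t, y => y
  | x, t => x
  | u, u => u
  | i, i => i
  | u, i => f
  | i, u => f

/-- lub in the truth order -/
def joinT : Four → Four → Four
  | t, _ => t
  | _, t => t
  | f, y => y
  | x, f => x
  | u, u => u
  | i, i => i
  | u, i => t
  | i, u => t

/-- lub in the precision order -/
def joinP : Four → Four → Four
  | u, y => y
  | x, u => x
  | i, _ => i
  | _, i => i
  | t, t => t
  | f, f => f
  | t, f => i
  | f, t => i

open Classical in
/-- glb of a set in the truth order -/
noncomputable def sInfT (s : Set Four) : Four :=
  if f ∈ s then f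
  else if u ∈ s ∧ i ∈ s then f
  else if u ∈ s then u
  else if i ∈ s then i
  else t

open Classical in
/-- lub of a set in the truth order -/
noncomputable def sSupT (s : Set Four) : Four :=
  if t ∈ s then t
  else if u ∈ s ∧ i ∈ s then t
  else if u ∈ s then u
  else if i ∈ s then i
  else f

open Classical in
/-- glb of a set in the precision order -/
noncomputable def sInfP (s : Set Four) : Four :=
  if u ∈ s then u
  else if t ∈ s ∧ f ∈ s then u
  else if t ∈ s then t
  else if f ∈ s then f
  else i

open Classical in
/-- lub of a set in the precision order -/
noncomputable def sSupP (s : Set Four) : Four :=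
  if i ∈ s then i
  else if t ∈ s ∧ f ∈ s then i
  else if t ∈ s then t
  else if f ∈ s then f
  else u

end Four

open Classical in
/-- identification of a pair of classical truth values with a four-valued truth value:
(T,F) = t, (F,T) = f, (F,F) = u, (T,T) = i -/
noncomputable def pairFour (a b : Prop) : Four :=
  if a then (if b then Four.i else Four.t)
  else (if b then Four.f else Four.u)
/-- first-order formulas over a relational vocabulary, with variables of type `V`
(nested abstract syntax: a quantifier binds a fresh variable, `none`) -/
inductive Fml (P : Type) (ar : P → ℕ) : Type → Type 1
  | atom {V : Type} (p : P) (ts : Fin (ar p) → V) : Fml P ar V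
  | not {V : Type} (φ : Fml P ar V) : Fml P ar V
  | and {V : Type} (φ χ : Fml P ar V) : Fml P ar V
  | or {V : Type} (φ χ : Fml P ar V) : Fml P ar V
  | all {V : Type} (φ : Fml P ar (Option V)) : Fml P ar V
  | ex {V : Type} (φ : Fml P ar (Option V)) : Fml P ar V

/-- four-valued structures -/
abbrev Struc (P : Type) (ar : P → ℕ) (D : Type) : Type := (p : P) → (Fin (ar p) → D) → Four
/-- two-valued (classical) structures -/
abbrev Struc2 (P : Type) (ar : P → ℕ) (D : Type) : Type := (p : P) → (Fin (ar p) → D) → Prop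

variable {P D : Type} {ar : P → ℕ}

/-- four-valued evaluation: ¬ is Belnap inverse, ∧/∀ glb in the truth order,
∨/∃ lub in the truth order -/
noncomputable def eval (Iv : Struc P ar D) : {V : Type} → (V → D) → Fml P ar V → Four
  | _, θ, .atom p ts => Iv p fun k => θ (ts k)
  | _, θ, .not φ => (eval Iv θ φ).inv
  | _, θ, .and φ χ => Four.meetT (eval Iv θ φ) (eval Iv θ χ)
  | _, θ, .or φ χ => Four.joinT (eval Iv θ φ) (eval Iv θ χ)
  | _, θ, .all φ => Four.sInfT {v | ∃ d : D, v = eval Iv (fun o => Option.elim o d θ) φ}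
  | _, θ, .ex φ => Four.sSupT {v | ∃ d : D, v = eval Iv (fun o => Option.elim o d θ) φ}

/-- classical two-valued satisfaction -/
def sat (Iv : Struc2 P ar D) : {V : Type} → (V → D) → Fml P ar V → Prop
  | _, θ, .atom p ts => Iv p fun k => θ (ts k)
  | _, θ, .not φ => ¬ sat Iv θ φ
  | _, θ, .and φ χ => sat Iv θ φ ∧ sat Iv θ χ
  | _, θ, .or φ χ => sat Iv θ φ ∨ sat Iv θ χ
  | _, θ, .all φ => ∀ d : D, sat Iv (fun o => Option.elim o d θ) φ
  | _, θ, .ex φ => ∃ d : D, sat Iv (fun o => Option.elim o d θ) φ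

/-- a formula contains no occurrence of negation -/
def negFree : {V : Type} → Fml P ar V → Prop
  | _, .atom _ _ => True
  | _, .not _ => False
  | _, .and φ χ => negFree φ ∧ negFree χ
  | _, .or φ χ => negFree φ ∧ negFree χ
  | _, .all φ => negFree φ
  | _, .ex φ => negFree φ

/-- the simultaneous ct/cf transformation; the first component is ctφ, the second cfφ;
the vocabulary `P ⊕ P` has `ctP = Sum.inl P` and `cfP = Sum.inr P` -/
def ctf : {V : Type} → Fml P ar V →
    Fml (P ⊕ P) (Sum.elim ar ar) V × Fml (P ⊕ P) (Sum.elim ar ar) V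
  | _, .atom p ts => (.atom (.inl p) ts, .atom (.inr p) ts)
  | _, .not φ => ((ctf φ).2, (ctf φ).1)
  | _, .and φ χ => (.and (ctf φ).1 (ctf χ).1, .or (ctf φ).2 (ctf χ).2)
  | _, .or φ χ => (.or (ctf φ).1 (ctf χ).1, .and (ctf φ).2 (ctf χ).2)
  | _, .all φ => (.all (ctf φ).1, .ex (ctf φ).2)
  | _, .ex φ => (.ex (ctf φ).1, .all (ctf φ).2)

/-- the two-valued encoding of a four-valued structure -/
def enc (Iv : Struc P ar D) : Struc2 (P ⊕ P) (Sum.elim ar ar) D :=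
  fun q => match q with
  | .inl p => fun ds => Four.lep .t (Iv p ds)
  | .inr p => fun ds => Four.lep .f (Iv p ds)

/-- pointwise precision order on structures -/
def slep (I J : Struc P ar D) : Prop := ∀ p ds, (I p ds).lep (J p ds)

/-- pointwise truth order on four-valued structures -/
def sleT (I J : Struc P ar D) : Prop := ∀ p ds, (I p ds).leT (J p ds)

/-- a four-valued structure is two-valued -/
def twoVal (I : Struc P ar D) : Prop := ∀ p ds, I p ds = Four.t ∨ I p ds = Four.f

/-- `M` is a model of the theory `T` (a set of sentences) -/
def models (M : Struc P ar D) (T : Set (Fml P ar Empty)) : Prop :=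
  ∀ φ ∈ T, eval M (fun x => x.elim) φ = Four.t

/-- `O` is a propagator for `T`: inflationary in the precision order, and every
two-valued model of `T` above the input stays above the output -/
def IsPropagator (T : Set (Fml P ar Empty)) (O : Struc P ar D → Struc P ar D) : Prop :=
  (∀ I, slep I (O I)) ∧
  ∀ I M, twoVal M → models M T → slep I M → slep (O I) M

open Classical in
/-- the INF propagator associated to the INF sentence ∀x̄ (ψ → L[x̄]), where the head
literal is `P(x̄)` if `pos = true` and `¬P(x̄)` otherwise; the body ψ has free variables
exactly the argument tuple x̄ of the head predicate `p` -/
noncomputable def infProp {P D : Type} {ar : P → ℕ} (pos : Bool) (p : P)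
    (ψ : Fml P ar (Fin (ar p))) (I : Struc P ar D) : Struc P ar D :=
  fun q ds =>
    if ∃ e : q = p, Four.lep .t (eval I (fun k => ds (e.symm ▸ k)) ψ)
    then Four.joinP (if pos then Four.t else Four.f) (I q ds)
    else I q ds


namespace Four
lemma lep_refl (a : Four) : a.lep a := by cases a <;> trivial
theorem lep_trans {a b c : Four} (h : a.lep b) (h2 : b.lep c) : a.lep c := by
  cases a <;> cases b <;> cases c <;> trivial
theorem inv_mono {a b : Four} (h : a.lep b) : a.inv.lep b.inv := by
  cases a <;> cases b <;> trivial
theorem meetT_mono {a b c d : Four} (h : a.lep b) (h2 : c.lep d) :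
    (a.meetT c).lep (b.meetT d) := by cases a <;> cases b <;> cases c <;> cases d <;> trivial
theorem joinT_mono {a b c d : Four} (h : a.lep b) (h2 : c.lep d) :
    (a.joinT c).lep (b.joinT d) := by cases a <;> cases b <;> cases c <;> cases d <;> trivial
theorem joinP_lep {a b c : Four} (h : a.lep c) (h2 : b.lep c) : (a.joinP b).lep c := by
  cases a <;> cases b <;> cases c <;> trivial
theorem lep_joinP_right (a b : Four) : b.lep (a.joinP b) := by cases a <;> cases b <;> trivial
theorem joinP_mono_right {a b c : Four} (h : b.lep c) : (a.joinP b).lep (a.joinP c) := by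
  cases a <;> cases b <;> cases c <;> trivial

theorem sInfT_mono {S T : Set Four}
    (hF : ∀ x ∈ S, ∃ y ∈ T, x.lep y) (hB : ∀ y ∈ T, ∃ x ∈ S, x.lep y) :
    (sInfT S).lep (sInfT T) := by
  classical
  have A : f ∈ S → f ∈ T ∨ i ∈ T := by
    intro hx; obtain ⟨y, hy, hl⟩ := hF f hx; cases y <;> simp_all [lep]
  have B : i ∈ S → i ∈ T := by
    intro hx; obtain ⟨y, hy, hl⟩ := hF i hx; cases y <;> simp_all [lep]
  have C : u ∈ T → u ∈ S := by
    intro hy; obtain ⟨x, hx, hl⟩ := hB u hy; cases x <;> simp_all [lep]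
  have E : f ∈ T → f ∈ S ∨ u ∈ S := by
    intro hy; obtain ⟨x, hx, hl⟩ := hB f hy; cases x <;> simp_all [lep]
  unfold sInfT
  split_ifs <;> first | trivial | (exfalso; tauto)

theorem sSupT_mono {S T : Set Four}
    (hF : ∀ x ∈ S, ∃ y ∈ T, x.lep y) (hB : ∀ y ∈ T, ∃ x ∈ S, x.lep y) :
    (sSupT S).lep (sSupT T) := by
  classical
  have A : t ∈ S → t ∈ T ∨ i ∈ T := by
    intro hx; obtain ⟨y, hy, hl⟩ := hF t hx; cases y <;> simp_all [lep]
  have B : i ∈ S → i ∈ T := by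
    intro hx; obtain ⟨y, hy, hl⟩ := hF i hx; cases y <;> simp_all [lep]
  have C : u ∈ T → u ∈ S := by
    intro hy; obtain ⟨x, hx, hl⟩ := hB u hy; cases x <;> simp_all [lep]
  have E : t ∈ T → t ∈ S ∨ u ∈ S := by
    intro hy; obtain ⟨x, hx, hl⟩ := hB t hy; cases x <;> simp_all [lep]
  unfold sSupT
  split_ifs <;> first | trivial | (exfalso; tauto)

theorem sInfT_twoval {s : Set Four} (h : u ∉ s) (h2 : i ∉ s) :
    sInfT s = t ∨ sInfT s = f := by
  classical
  unfold sInfT; split_ifs <;> tauto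

theorem sSupT_twoval {s : Set Four} (h : u ∉ s) (h2 : i ∉ s) :
    sSupT s = t ∨ sSupT s = f := by
  classical
  unfold sSupT; split_ifs <;> tauto

end Four

theorem eval_mono {P D : Type} {ar : P → ℕ} {I J : Struc P ar D} (h : slep I J) :
    ∀ {V : Type} (θ : V → D) (φ : Fml P ar V), (eval I θ φ).lep (eval J θ φ) := by
  intro V θ φ
  induction φ with
  | atom p ts => exact h p _
  | not φ ih => exact Four.inv_mono (ih θ)
  | and φ χ ih1 ih2 => exact Four.meetT_mono (ih1 θ) (ih2 θ)
  | or φ χ ih1 ih2 => exact Four.joinT_mono (ih1 θ) (ih2 θ)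
  | all φ ih =>
    refine Four.sInfT_mono ?_ ?_
    · rintro x ⟨d, rfl⟩; exact ⟨_, ⟨d, rfl⟩, ih _⟩
    · rintro y ⟨d, rfl⟩; exact ⟨_, ⟨d, rfl⟩, ih _⟩
  | ex φ ih =>
    refine Four.sSupT_mono ?_ ?_
    · rintro x ⟨d, rfl⟩; exact ⟨_, ⟨d, rfl⟩, ih _⟩
    · rintro y ⟨d, rfl⟩; exact ⟨_, ⟨d, rfl⟩, ih _⟩

theorem eval_twoval {P D : Type} {ar : P → ℕ} {M : Struc P ar D} (hM : twoVal M) :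
    ∀ {V : Type} (θ : V → D) (φ : Fml P ar V),
      eval M θ φ = Four.t ∨ eval M θ φ = Four.f := by
  intro V θ φ
  induction φ with
  | atom p ts => exact hM p _
  | not φ ih => rcases ih θ with h | h <;> simp [eval, h, Four.inv]
  | and φ χ ih1 ih2 =>
    rcases ih1 θ with h1 | h1 <;> rcases ih2 θ with h2 | h2 <;>
      simp [eval, h1, h2, Four.meetT]
  | or φ χ ih1 ih2 =>
    rcases ih1 θ with h1 | h1 <;> rcases ih2 θ with h2 | h2 <;>
      simp [eval, h1, h2, Four.joinT]
  | all φ ih =>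
    refine Four.sInfT_twoval ?_ ?_ <;> rintro ⟨d, hd⟩ <;>
      rcases ih (fun o => Option.elim o d θ) with h | h <;> simp_all [eval]
  | ex φ ih =>
    refine Four.sSupT_twoval ?_ ?_ <;> rintro ⟨d, hd⟩ <;>
      rcases ih (fun o => Option.elim o d θ) with h | h <;> simp_all [eval]

/-- The INF propagator associated to an INF sentence ∀x̄ (ψ → L[x̄]) is a monotone
propagator for that sentence (the sentence is satisfied by a two-valued M iff for every
tuple d̄, if ψ is true in M under x̄ ↦ d̄ then the head literal holds at d̄). -/
theorem infProp_isPropagator_monotone {P D : Type} {ar : P → ℕ}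
    (pos : Bool) (p : P) (ψ : Fml P ar (Fin (ar p))) :
    (∀ I : Struc P ar D, slep I (infProp pos p ψ I)) ∧
    (∀ I M : Struc P ar D, twoVal M →
      (∀ ds : Fin (ar p) → D, eval M ds ψ = Four.t →
        M p ds = (if pos then Four.t else Four.f)) →
      slep I M → slep (infProp pos p ψ I) M) ∧
    (∀ I J : Struc P ar D, slep I J → slep (infProp pos p ψ I) (infProp pos p ψ J)) := by
  classical
  refine ⟨?_, ?_, ?_⟩
  · intro I q ds
    unfold infProp
    by_cases h : ∃ e : q = p, Four.t.lep (eval I (fun k => ds (e.symm ▸ k)) ψ)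
    · rw [if_pos h]; exact Four.lep_joinP_right _ _
    · rw [if_neg h]; exact Four.lep_refl _
  · intro I M hM hmod hle q ds
    unfold infProp
    by_cases h : ∃ e : q = p, Four.t.lep (eval I (fun k => ds (e.symm ▸ k)) ψ)
    · rw [if_pos h]
      obtain ⟨rfl, hψ⟩ := h
      have h2 : Four.t.lep (eval M ds ψ) :=
        Four.lep_trans hψ (eval_mono hle ds ψ)
      have h3 : eval M ds ψ = Four.t := by
        rcases eval_twoval hM ds ψ with h' | h' <;> simp_all [Four.lep]
      refine Four.joinP_lep ?_ (hle q ds)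
      rw [hmod ds h3]; exact Four.lep_refl _
    · rw [if_neg h]; exact hle q ds
  · intro I J hle q ds
    unfold infProp
    by_cases h : ∃ e : q = p, Four.t.lep (eval I (fun k => ds (e.symm ▸ k)) ψ)
    · have h' : ∃ e : q = p, Four.t.lep (eval J (fun k => ds (e.symm ▸ k)) ψ) := by
        obtain ⟨rfl, hψ⟩ := h
        exact ⟨rfl, Four.lep_trans hψ (eval_mono hle ds ψ)⟩
      rw [if_pos h, if_pos h']
      exact Four.joinP_mono_right (hle q ds)
    · rw [if_neg h]
      by_cases h' : ∃ e : q = p, Four.t.lep (eval J (fun k => ds (e.symm ▸ k)) ψ)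
      · rw [if_pos h']
        exact Four.lep_trans (hle q ds) (Four.lep_joinP_right _ _)
      · rw [if_neg h']; exact hle q ds
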